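/- Let G be a group acting on the left on a set E, and for n ≥ 0 let S_n(G,E) = G\\E^{n+1} be the action groupoid of the diagonal action of G on E^{n+1}. Then for every n ≥ 2 the natural functor φ_n : S_n(G,E) → S_1(G,E) ×^{(2)}_{S_0(G,E)} S_1(G,E) ×^{(2)}_{S_0(G,E)} ⋯ ×^{(2)}_{S_0(G,E)} S_1(G,E) (n factors, the i-th comparison taken over the functors induced by forgetting the first, resp. second, component of a pair), sending (x_0,…,x_n) to the tuple ((x_0,x_1), (x_1,x_2), …, (x_{n−1},x_n)) with identity comparison isomorphisms, is an equivalence of categories. -/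
import Mathlib


universe u v

open CategoryTheory

namespace HeckeWald

variable (G : Type u) [Group G] (E : Type v) [MulAction G E]

/-- The action groupoid `G\\S` of a group action: objects are elements of `S`, morphisms
`x → y` are group elements `g` with `g • x = y`. -/
structure ActObj (S : Type v) [MulAction G S] where
  pt : S

instance (S : Type v) [MulAction G S] : Category (ActObj G S) where
  Hom x y := {g : G // g • x.pt = y.pt}
  id x := ⟨1, one_smul G x.pt⟩
  comp {x y z} f g := ⟨g.1 * f.1, by rw [mul_smul, f.2, g.2]⟩
  id_comp f := Subtype.ext (mul_one _)
  comp_id f := Subtype.ext (one_mul _)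
  assoc f g h := Subtype.ext (mul_assoc _ _ _).symm

/-- An object of the `n`-fold iterated 2-fiber product
`S₁ ×⁽²⁾_{S₀} S₁ ×⁽²⁾_{S₀} ⋯ ×⁽²⁾_{S₀} S₁` of action groupoids (`S₁ = G\\E²`,
`S₀ = G\\E`), the comparison isomorphisms being taken over the functors induced by
forgetting the first resp. second component of a pair:  a tuple of `n` objects of `S₁`
together with comparison isomorphisms (group elements) `θ k` from the second component of
the `k`-th pair to the first component of the `(k+1)`-st. -/
structure IterObj (n : ℕ) where
  a : Fin n → E × E
  θ : ∀ k : ℕ, k + 1 < n → G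
  hθ : ∀ (k : ℕ) (h : k + 1 < n), θ k h • (a ⟨k, by omega⟩).2 = (a ⟨k + 1, h⟩).1

instance (n : ℕ) : Category (IterObj G E n) where
  Hom A B := {φ : Fin n → G //
    (∀ k : Fin n, φ k • A.a k = B.a k) ∧
    ∀ (k : ℕ) (h : k + 1 < n),
      B.θ k h * φ ⟨k, by omega⟩ = φ ⟨k + 1, h⟩ * A.θ k h}
  id A := ⟨fun _ => 1, fun k => one_smul G _, fun k h => by rw [mul_one, one_mul]⟩
  comp {A B C} f g := ⟨fun k => g.1 k * f.1 k,
    fun k => by rw [mul_smul, f.2.1, g.2.1],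
    fun k h => by rw [← mul_assoc, g.2.2 k h, mul_assoc, f.2.2 k h, ← mul_assoc]⟩
  id_comp f := Subtype.ext (funext fun k => mul_one _)
  comp_id f := Subtype.ext (funext fun k => one_mul _)
  assoc f g h := Subtype.ext (funext fun k => (mul_assoc _ _ _).symm)

/-- The canonical comparison functor `φₙ` from the action groupoid
`Sₙ(G,E) = G\\E^{n+1}` to the iterated 2-fiber product of `n` copies of `S₁(G,E)`,
sending `(x₀, …, xₙ)` to `((x₀,x₁), (x₁,x₂), …, (x_{n-1},xₙ))` with identity comparison
isomorphisms. -/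
def phiFunctor (n : ℕ) : ActObj G (Fin (n + 1) → E) ⥤ IterObj G E n where
  obj x :=
    { a := fun k => (x.pt ⟨k.1, by have := k.isLt; omega⟩,
        x.pt ⟨k.1 + 1, by have := k.isLt; omega⟩)
      θ := fun _ _ => 1
      hθ := fun k h => one_smul G _ }
  map {x y} f :=
    ⟨fun _ => f.1,
     fun k => by
       simp only [Prod.smul_mk, Prod.mk.injEq]
       exact ⟨congrFun f.2 _, congrFun f.2 _⟩,
     fun k h => by rw [one_mul, mul_one]⟩
  map_id x := Subtype.ext (funext fun _ => rfl)
  map_comp f g := Subtype.ext (funext fun _ => rfl)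

/-- for `n ≥ 2`, the comparison functor
`φₙ : Sₙ(G,E) → S₁ ×⁽²⁾_{S₀} ⋯ ×⁽²⁾_{S₀} S₁` is an equivalence of categories. -/
theorem phi_isEquivalence (n : ℕ) (hn : 2 ≤ n) : (phiFunctor G E n).IsEquivalence := by
  have hn1 : 0 < n := by omega
  -- constancy of morphisms between images
  have hconst : ∀ {x y : ActObj G (Fin (n + 1) → E)}
      (φ : (phiFunctor G E n).obj x ⟶ (phiFunctor G E n).obj y)
      (k : ℕ) (hk : k < n), φ.1 ⟨k, hk⟩ = φ.1 ⟨0, hn1⟩ := by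
    intro x y φ k
    induction k with
    | zero => intro _; rfl
    | succ k ih =>
      intro hk
      have h2 := φ.2.2 k hk
      simp only [phiFunctor, one_mul, mul_one] at h2
      rw [← h2, ih (by omega)]
  have hfaithful : (phiFunctor G E n).Faithful := by
    constructor
    intro x y f g h
    apply Subtype.ext
    have := congrFun (congrArg Subtype.val h) ⟨0, hn1⟩
    exact this
  have hfull : (phiFunctor G E n).Full := by
    constructor
    intro x y φ
    refine ⟨⟨φ.1 ⟨0, hn1⟩, ?_⟩, ?_⟩
    · funext j
      rcases Nat.lt_or_ge j.1 n with hj | hj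
      · have := φ.2.1 ⟨j.1, hj⟩
        simp only [phiFunctor, Prod.smul_mk, Prod.mk.injEq] at this
        have h1 := this.1
        rw [hconst φ j.1 hj] at h1
        have : (⟨j.1, by omega⟩ : Fin (n + 1)) = j := Fin.ext rfl
        rwa [this] at h1
      · have hjn : j.1 = n := by omega
        have := φ.2.1 ⟨n - 1, by omega⟩
        simp only [phiFunctor, Prod.smul_mk, Prod.mk.injEq] at this
        have h2 := this.2
        rw [hconst φ (n - 1) (by omega)] at h2
        have he : (⟨n - 1 + 1, by omega⟩ : Fin (n + 1)) = j := Fin.ext (by simp; omega)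
        rwa [he] at h2
    · apply Subtype.ext
      funext k
      show φ.1 ⟨0, hn1⟩ = φ.1 k
      rw [← hconst φ k.1 k.2]
  have hess : (phiFunctor G E n).EssSurj := by
    constructor
    intro A
    -- recursively defined correcting group elements
    set g : ℕ → G := fun k =>
      Nat.rec 1 (fun k gk => (if h : k + 1 < n then A.θ k h else 1) * gk) k with hg
    have hgsucc : ∀ (k : ℕ) (h : k + 1 < n), g (k + 1) = A.θ k h * g k := by
      intro k h
      simp only [hg, dif_pos h]
    -- the candidate object
    set x : Fin (n + 1) → E := fun j =>
      if h : j.1 < n then (g j.1)⁻¹ • (A.a ⟨j.1, h⟩).1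
      else (g (j.1 - 1))⁻¹ • (A.a ⟨j.1 - 1, by have := j.isLt; omega⟩).2 with hx
    refine ⟨⟨x⟩, ⟨?_⟩⟩
    have hx1 : ∀ (k : ℕ) (hk : k < n), x ⟨k, by omega⟩ = (g k)⁻¹ • (A.a ⟨k, hk⟩).1 := by
      intro k hk
      simp only [hx, dif_pos hk]
    have hx2 : ∀ (k : ℕ) (hk : k < n),
        g k • x ⟨k + 1, by omega⟩ = (A.a ⟨k, hk⟩).2 := by
      intro k hk
      rcases Nat.lt_or_ge (k + 1) n with h | h
      · rw [hx1 (k + 1) h, hgsucc k h]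
        rw [← A.hθ k h]
        rw [mul_inv_rev, mul_smul, smul_inv_smul, inv_smul_smul]
      · have hkn : k = n - 1 := by omega
        simp only [hx]
        rw [dif_neg (by omega)]
        simp only [Nat.add_sub_cancel]
        rw [smul_inv_smul]
    have key : ∀ k : Fin n, g k.1 • ((phiFunctor G E n).obj ⟨x⟩).a k = A.a k := by
      intro k
      show g k.1 • (x ⟨k.1, _⟩, x ⟨k.1 + 1, _⟩) = A.a k
      rw [Prod.smul_mk]
      have e1 : g k.1 • x ⟨k.1, by omega⟩ = (A.a ⟨k.1, k.2⟩).1 := by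
        rw [hx1 k.1 k.2, smul_inv_smul]
      have e2 := hx2 k.1 k.2
      rw [e1, e2]
    refine ⟨⟨fun k => g k.1, key, fun k h => by
        show A.θ k h * g k = g (k + 1) * 1
        rw [mul_one]; exact (hgsucc k h).symm⟩,
      ⟨fun k => (g k.1)⁻¹, fun k => by rw [← key k, inv_smul_smul], fun k h => by
        show (1 : G) * (g k)⁻¹ = (g (k + 1))⁻¹ * A.θ k h
        rw [one_mul, hgsucc k h, mul_inv_rev, mul_assoc, inv_mul_cancel, mul_one]⟩,
      ?_, ?_⟩
    · apply Subtype.ext; funext k; exact inv_mul_cancel _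
    · apply Subtype.ext; funext k; exact mul_inv_cancel _
  exact { full := hfull, faithful := hfaithful, essSurj := hess }

end HeckeWald
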